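/- arXiv:2411.18492 — 2 statements merged into one kernel-verified Lean document; each statement's English description precedes it below -/
import Mathlib

section
/- For l ∈ {1,2}: (i) for every positive integer m and every z at which the product-form definition of K_{l,l}(m, z) is defined, K_{l,l}(m, z) equals (m, d_l^∞)^{−z} · χ_{d_l}((m, (D/d_l)^∞)) · χ_{D/d_l}((m, d_l^∞)) · ∏_{p ∤ D, p^a ∥ m} (1 + χ_D(p)/p)^{−1} χ_{d_l}(p^a) (Σ_{j=0}^{a} χ_D(p^j)p^{−jz} − p^{−(z+1)} Σ_{j=0}^{a−2} χ_D(p^j)p^{−jz}); (ii) for every prime p with p ∤ D, K_{l,l}(p, z) = (χ_{d_l}(p) + χ_{D/d_l}(p) p^{−z}) · (1 + χ_D(p)/p)^{−1}; (iii) for every prime p with p | D, every α ≥ 1, and every z with Re z ≥ 0, |K_{l,l}(p^α, z)| ≤ 1. -/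
noncomputable section

open Complex Finset MeasureTheory

namespace EpsteinPaper

/-- `d` is a fundamental discriminant. -/
def IsFundDisc (d : ℤ) : Prop :=
  (d % 4 = 1 ∧ Squarefree d) ∨
  (d % 4 = 0 ∧ Squarefree (d / 4) ∧ (d / 4 % 4 = 2 ∨ d / 4 % 4 = 3))

/-- Generalized binomial coefficient `z choose k`. -/
def gchoose (z : ℂ) (k : ℕ) : ℂ := (∏ i ∈ Finset.range k, (z - (i : ℂ))) / (k.factorial : ℂ)

/-- `τ_k(m)`: the number of ordered `k`-tuples of positive integers with product `m`. -/
def tauk (k m : ℕ) : ℕ := Nat.card {f : Fin k → ℕ // ∏ i, f i = m}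

/-- `τ(m)`: the number of divisors of `m`. -/
def tau (m : ℕ) : ℕ := m.divisors.card

/-- `(m, d^∞)`: the largest divisor of `m` supported on primes dividing `d`. -/
def corad (m d : ℕ) : ℕ :=
  ∏ p ∈ m.primeFactors.filter (fun p => p ∣ d), p ^ (m.factorization p)

/-- `G_N = ∏_{p | N} (1 + p^{-3/4})²`. -/
def GNfac (N : ℕ) : ℝ := ∏ p ∈ N.primeFactors, (1 + (p : ℝ) ^ (-(3 / 4 : ℝ))) ^ 2

/-- The data of the paper: two moduli together with Dirichlet characters on them. -/
structure Ctx where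
  d₁ : ℕ
  d₂ : ℕ
  χ₁ : DirichletCharacter ℂ d₁
  χ₂ : DirichletCharacter ℂ d₂

namespace Ctx

/-- `D = d₁ d₂`. -/
def D (P : Ctx) : ℕ := P.d₁ * P.d₂

/-- Swapping the roles of the two characters. -/
def swap (P : Ctx) : Ctx := ⟨P.d₂, P.d₁, P.χ₂, P.χ₁⟩

/-- The standing hypotheses: `d₁, d₂` are positive and coprime, `-D` is a fundamental
discriminant, and `χ₁, χ₂` are real primitive Dirichlet characters. -/
def Good (P : Ctx) : Prop :=
  0 < P.d₁ ∧ 0 < P.d₂ ∧ Nat.Coprime P.d₁ P.d₂ ∧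
  IsFundDisc (-(P.D : ℤ)) ∧
  P.χ₁.IsPrimitive ∧ P.χ₂.IsPrimitive ∧
  (∀ a : ZMod P.d₁, star (P.χ₁ a) = P.χ₁ a) ∧
  (∀ a : ZMod P.d₂, star (P.χ₂ a) = P.χ₂ a)

/-- `χ_D(n) = χ_{d₁}(n) χ_{d₂}(n)` as a function on `ℕ`. -/
def chiD (P : Ctx) (n : ℕ) : ℂ := P.χ₁ (n : ZMod P.d₁) * P.χ₂ (n : ZMod P.d₂)

/-- `χ_D` as a Dirichlet character modulo `D = d₁ d₂`. -/
def chiDchar (P : Ctx) : DirichletCharacter ℂ (P.d₁ * P.d₂) :=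
  (DirichletCharacter.changeLevel (dvd_mul_right P.d₁ P.d₂) P.χ₁) *
  (DirichletCharacter.changeLevel (dvd_mul_left P.d₂ P.d₁) P.χ₂)

/-- `r(n) = Σ_{ab=n} χ_{d₁}(a) χ_{d₂}(b)`. -/
def r (P : Ctx) (n : ℕ) : ℂ :=
  ∑ p ∈ n.divisorsAntidiagonal, P.χ₁ (p.1 : ZMod P.d₁) * P.χ₂ (p.2 : ZMod P.d₂)

/-- `α` is the multiplicative function whose generating series at each prime `p` is
`((1 - χ_{d₁}(p) x) (1 - χ_{d₂}(p) x))^{1/2}` (principal binomial series); equivalently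
`Σ α(ν) ν^{-s} = (L(s,χ_{d₁}) L(s,χ_{d₂}))^{-1/2}` for `Re s > 1`. -/
def IsAlpha (P : Ctx) (α : ℕ → ℂ) : Prop :=
  α 1 = 1 ∧
  (∀ m n : ℕ, Nat.Coprime m n → α (m * n) = α m * α n) ∧
  (∀ p : ℕ, p.Prime → ∀ k : ℕ, α (p ^ k) =
    ∑ ij ∈ Finset.HasAntidiagonal.antidiagonal k,
      gchoose (1 / 2) ij.1 * (-(P.χ₁ (p : ZMod P.d₁))) ^ ij.1 *
        (gchoose (1 / 2) ij.2 * (-(P.χ₂ (p : ZMod P.d₂))) ^ ij.2))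

end Ctx

/-- The smoothing weight `𝓛(ν)`. -/
def LL (X : ℝ) (ν : ℕ) : ℝ :=
  if (ν : ℝ) < Real.sqrt X then 1
  else if (ν : ℝ) ≤ X then 2 * Real.log (X / (ν : ℝ)) / Real.log X
  else 0

/-- `β(ν) = α(ν) 𝓛(ν)`. -/
def betaf (α : ℕ → ℂ) (X : ℝ) (ν : ℕ) : ℂ := α ν * ((LL X ν : ℝ) : ℂ)

/-- The mollifier `η(s) = Σ_{ν ≤ X} β(ν) ν^{-s}`. -/
def eta (α : ℕ → ℂ) (X : ℝ) (s : ℂ) : ℂ :=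
  ∑ ν ∈ Finset.Icc 1 ⌊X⌋₊, betaf α X ν * (ν : ℂ) ^ (-s)

namespace Ctx

/-- `L(s) = L(s, χ_{d₁}) L(s, χ_{d₂})`. -/
def Lfun (P : Ctx) [NeZero P.d₁] [NeZero P.d₂] (s : ℂ) : ℂ :=
  P.χ₁.LFunction s * P.χ₂.LFunction s

/-- `F(t) = (2π/√D)^{-(1/2+it)} Γ(1/2+it) L(1/2+it) |η(1/2+it)|² e^{(π/2 - 1/T) t}`. -/
def Ffun (P : Ctx) [NeZero P.d₁] [NeZero P.d₂] (α : ℕ → ℂ) (T X : ℝ) (t : ℝ) : ℂ :=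
  (((2 * Real.pi / Real.sqrt (P.D : ℝ) : ℝ)) : ℂ) ^ (-(1 / 2 + Complex.I * (t : ℂ))) *
  Complex.Gamma (1 / 2 + Complex.I * (t : ℂ)) *
  P.Lfun (1 / 2 + Complex.I * (t : ℂ)) *
  ((‖eta α X (1 / 2 + Complex.I * (t : ℂ))‖ ^ 2 : ℝ) : ℂ) *
  ((Real.exp ((Real.pi / 2 - 1 / T) * t) : ℝ) : ℂ)

/-- `I(t, H) = ∫_t^{t+H} F(u) du`. -/
def Ifun (P : Ctx) [NeZero P.d₁] [NeZero P.d₂] (α : ℕ → ℂ) (T X t H : ℝ) : ℂ :=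
  ∫ u in t..(t + H), P.Ffun α T X u

/-- The function `G(y)` (with `δ = 1/T`). -/
def Gfun (P : Ctx) (α : ℕ → ℂ) (T X : ℝ) (y : ℝ) : ℝ :=
  (‖∑ ν₁ ∈ Finset.Icc 1 ⌊X⌋₊, ∑ ν₂ ∈ Finset.Icc 1 ⌊X⌋₊,
    betaf α X ν₁ * betaf α X ν₂ / (ν₂ : ℂ) *
    ∑' n : ℕ, P.r n *
      Complex.exp (-(((2 * Real.pi * (n : ℝ) * (ν₁ : ℝ) /
          (Real.sqrt (P.D : ℝ) * (ν₂ : ℝ)) * y : ℝ)) : ℂ) *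
        (((Real.sin (1 / T) : ℝ) : ℂ) + Complex.I * ((Real.cos (1 / T) : ℝ) : ℂ)))‖) ^ 2

/-- `J(x, θ) = ∫_x^∞ G(u) u^{-θ} du`. -/
def Jfun (P : Ctx) (α : ℕ → ℂ) (T X θ x : ℝ) : ℝ :=
  ∫ u in Set.Ioi x, P.Gfun α T X u * u ^ (-θ)

/-- The Euler-factor function `K(m, s)`. -/
def Kf (P : Ctx) (m : ℕ) (s : ℂ) : ℂ :=
  ∏ p ∈ m.primeFactors,
    ((∑' k : ℕ, (P.r (p ^ k)) ^ 2 * (p : ℂ) ^ (-(k : ℂ) * s))⁻¹ *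
     (∑' k : ℕ, P.r (p ^ (m.factorization p + k)) * P.r (p ^ k) * (p : ℂ) ^ (-(k : ℂ) * s)))

/-- `K_{l,l}(m, z)` in its "sum" form (an entire function of `z`); the case `l = 1`.  The case
`l = 2` is obtained by applying this to `P.swap`. -/
def KllS (P : Ctx) (m : ℕ) (z : ℂ) : ℂ :=
  ((corad m P.d₁ : ℕ) : ℂ) ^ (-z) *
  P.χ₁ ((corad m P.d₂ : ℕ) : ZMod P.d₁) * P.χ₂ ((corad m P.d₁ : ℕ) : ZMod P.d₂) *
  ∏ p ∈ m.primeFactors.filter (fun p => ¬ p ∣ P.D),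
    (1 + P.chiD p / (p : ℂ))⁻¹ * (P.χ₁ (p : ZMod P.d₁)) ^ (m.factorization p) *
    ((∑ j ∈ Finset.range (m.factorization p + 1), P.chiD (p ^ j) * (p : ℂ) ^ (-(j : ℂ) * z)) -
      (p : ℂ) ^ (-(z + 1)) *
        ∑ j ∈ Finset.range (m.factorization p - 1), P.chiD (p ^ j) * (p : ℂ) ^ (-(j : ℂ) * z))

/-- `K_{l,l}(m, z)` in its original "product" form; the case `l = 1`. -/
def KllP (P : Ctx) (m : ℕ) (z : ℂ) : ℂ :=
  ((corad m P.d₁ : ℕ) : ℂ) ^ (-z) *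
  P.χ₁ ((corad m P.d₂ : ℕ) : ZMod P.d₁) * P.χ₂ ((corad m P.d₁ : ℕ) : ZMod P.d₂) *
  ∏ p ∈ m.primeFactors.filter (fun p => ¬ p ∣ P.D),
    (1 - (p : ℂ) ^ (-(2 : ℂ)))⁻¹ * (1 - P.chiD p * (p : ℂ) ^ (-z))⁻¹ * (1 - P.chiD p / (p : ℂ)) *
    (P.χ₁ (p : ZMod P.d₁)) ^ (m.factorization p) *
    (1 - (p : ℂ) ^ (-(z + 1)) +
      P.chiD (p ^ (m.factorization p + 1)) *
        (p : ℂ) ^ (-((m.factorization p : ℂ) * z + 1)) * (1 - (p : ℂ) ^ (-(z - 1))))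

/-- `K_{l,l}` for `l ∈ {1, 2}` (sum form). -/
def Kl (P : Ctx) (l : Fin 2) : ℕ → ℂ → ℂ :=
  if l = 0 then P.KllS else P.swap.KllS

/-- `K_{1,2}(m₁, m₂, z)`. -/
def K12 (P : Ctx) (m₁ m₂ : ℕ) (z : ℂ) : ℂ :=
  P.χ₁ (m₁ : ZMod P.d₁) * P.χ₂ (m₂ : ZMod P.d₂) *
  (∑ q ∈ (corad (m₁ * m₂ / P.D) P.D).divisors, (q : ℂ) ^ (-z)) *
  ∏ p ∈ (m₁ * m₂).primeFactors.filter (fun p => ¬ p ∣ P.D),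
    (1 + P.chiD p / (p : ℂ))⁻¹ *
    ((∑ j ∈ Finset.range ((m₁ * m₂).factorization p + 1), (p : ℂ) ^ (-(j : ℂ) * z)) -
      P.chiD p * (p : ℂ) ^ (-(z + 1)) *
        ∑ j ∈ Finset.range ((m₁ * m₂).factorization p - 1), (p : ℂ) ^ (-(j : ℂ) * z))

end Ctx

/-- The Gauss sum `G(χ) = Σ_{x mod d} χ(x) e^{2πi x/d}`. -/
def gaussS (d : ℕ) (χ : DirichletCharacter ℂ d) : ℂ :=
  ∑ x ∈ Finset.range d, χ (x : ZMod d) * Complex.exp (2 * (Real.pi : ℂ) * Complex.I * (x : ℂ) / (d : ℂ))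

/-- `χ(x / y)`, with the convention that this is `0` when `y ∤ x`. -/
def chiAt (d : ℕ) (χ : DirichletCharacter ℂ d) (x y : ℕ) : ℂ :=
  if y ∣ x then χ ((x / y : ℕ) : ZMod d) else 0

namespace Ctx

/-- The exponential sum `ε_q(l)`. -/
def epsq (P : Ctx) (m₁ m₂ l q : ℕ) : ℂ :=
  ∑ a ∈ (Finset.range q).filter (fun a => Nat.Coprime a q),
    Complex.exp (-(2 * (Real.pi : ℂ) * Complex.I * (a : ℂ) * (l : ℂ)) / (q : ℂ)) *
    (gaussS P.d₁ P.χ₁ / ((Real.sqrt (P.d₁ : ℝ) : ℝ) : ℂ) *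
        P.χ₁ ((a * (m₁ / Nat.gcd m₁ q) : ℕ) : ZMod P.d₁) *
        chiAt P.d₂ P.χ₂ (q / Nat.gcd q m₁) P.d₁ +
      gaussS P.d₂ P.χ₂ / ((Real.sqrt (P.d₂ : ℝ) : ℝ) : ℂ) *
        P.χ₂ ((a * (m₁ / Nat.gcd m₁ q) : ℕ) : ZMod P.d₂) *
        chiAt P.d₁ P.χ₁ (q / Nat.gcd q m₁) P.d₂) *
    ((starRingEnd ℂ) (gaussS P.d₁ P.χ₁) / ((Real.sqrt (P.d₁ : ℝ) : ℝ) : ℂ) *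
        P.χ₁ ((a * (m₂ / Nat.gcd m₂ q) : ℕ) : ZMod P.d₁) *
        chiAt P.d₂ P.χ₂ (q / Nat.gcd q m₂) P.d₁ +
      (starRingEnd ℂ) (gaussS P.d₂ P.χ₂) / ((Real.sqrt (P.d₂ : ℝ) : ℝ) : ℂ) *
        P.χ₂ ((a * (m₂ / Nat.gcd m₂ q) : ℕ) : ZMod P.d₂) *
        chiAt P.d₁ P.χ₁ (q / Nat.gcd q m₂) P.d₂)

/-- The `q`-th term of the singular series `σ(l, m₁, m₂)`. -/
def sigTerm (P : Ctx) (m₁ m₂ l q : ℕ) : ℂ :=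
  P.epsq m₁ m₂ l q * ((Nat.gcd q (m₁ * m₂) : ℕ) : ℂ) /
    ((q : ℂ) ^ 2 *
      ((Real.sqrt (((P.D / Nat.gcd (q / Nat.gcd q m₁) P.D) *
          (P.D / Nat.gcd (q / Nat.gcd q m₂) P.D) : ℕ) : ℝ) : ℝ) : ℂ))

/-- The singular series `σ(l, m₁, m₂) = Σ_{q ≥ 1} ε_q(l) (q, m₁m₂) / (q² √(r₁ r₂))`. -/
def sigmaS (P : Ctx) (m₁ m₂ l : ℕ) : ℂ :=
  ∑' q : ℕ, if q = 0 then 0 else P.sigTerm m₁ m₂ l q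

/-- The shifted-convolution Dirichlet series `D_{m₁,m₂}(s, l)`. -/
def Dser (P : Ctx) (m₁ m₂ l : ℕ) (s : ℂ) : ℂ :=
  ∑' n : ℕ, (if m₂ ∣ (m₁ * n + l) then P.r ((m₁ * n + l) / m₂) else 0) * P.r n *
    ((m₁ : ℂ) * (n : ℂ) + (l : ℂ) / 2) ^ (-s)

/-- The fourfold Selberg sum `S(z)` built from `K`. -/
def Ssum (P : Ctx) (α : ℕ → ℂ) (X : ℝ) (z : ℂ) : ℂ :=
  ∑ ν₁ ∈ Finset.Icc 1 ⌊X⌋₊, ∑ ν₂ ∈ Finset.Icc 1 ⌊X⌋₊,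
    ∑ ν₃ ∈ Finset.Icc 1 ⌊X⌋₊, ∑ ν₄ ∈ Finset.Icc 1 ⌊X⌋₊,
      betaf α X ν₁ * betaf α X ν₂ * betaf α X ν₃ * betaf α X ν₄ / ((ν₂ : ℂ) * (ν₄ : ℂ)) *
      (((Nat.gcd (ν₁ * ν₄) (ν₂ * ν₃) : ℕ) : ℂ) / ((ν₁ : ℂ) * (ν₃ : ℂ))) ^ ((1 : ℂ) - z) *
      P.Kf ((ν₁ * ν₄) / Nat.gcd (ν₁ * ν₄) (ν₂ * ν₃)) (1 - z) *
      P.Kf ((ν₂ * ν₃) / Nat.gcd (ν₁ * ν₄) (ν₂ * ν₃)) (1 - z)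

/-- The fourfold Selberg sum `S_{l,l}(z)` built from `K_{l,l}`. -/
def Sll (P : Ctx) (α : ℕ → ℂ) (l : Fin 2) (X : ℝ) (z : ℂ) : ℂ :=
  ∑ ν₁ ∈ Finset.Icc 1 ⌊X⌋₊, ∑ ν₂ ∈ Finset.Icc 1 ⌊X⌋₊,
    ∑ ν₃ ∈ Finset.Icc 1 ⌊X⌋₊, ∑ ν₄ ∈ Finset.Icc 1 ⌊X⌋₊,
      betaf α X ν₁ * betaf α X ν₂ * betaf α X ν₃ * betaf α X ν₄ / ((ν₂ : ℂ) * (ν₄ : ℂ)) *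
      (((Nat.gcd (ν₁ * ν₄) (ν₂ * ν₃) : ℕ) : ℂ) / ((ν₁ : ℂ) * (ν₃ : ℂ))) ^ ((1 : ℂ) - z) *
      P.Kl l ((ν₁ * ν₄) / Nat.gcd (ν₁ * ν₄) (ν₂ * ν₃)) z *
      P.Kl l ((ν₂ * ν₃) / Nat.gcd (ν₁ * ν₄) (ν₂ * ν₃)) z

/-- The sum `S_z(X₁, γ, N)` built from `K`. -/
def SzK (P : Ctx) (α : ℕ → ℂ) (X₁ : ℝ) (γ z : ℂ) (N : ℕ) : ℂ :=
  ∑ ν ∈ (Finset.Icc 1 ⌊X₁⌋₊).filter (fun ν => Nat.Coprime ν N),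
    α ν * P.Kf ν (1 - z) * (ν : ℂ) ^ (γ - 1) * ((Real.log (X₁ / (ν : ℝ)) : ℝ) : ℂ)

/-- The sum `S_z^{(l,l)}(X₁, γ, N)` built from `K_{l,l}`. -/
def SzKll (P : Ctx) (α : ℕ → ℂ) (l : Fin 2) (X₁ : ℝ) (γ z : ℂ) (N : ℕ) : ℂ :=
  ∑ ν ∈ (Finset.Icc 1 ⌊X₁⌋₊).filter (fun ν => Nat.Coprime ν N),
    α ν * P.Kl l ν z * (ν : ℂ) ^ (γ - 1) * ((Real.log (X₁ / (ν : ℝ)) : ℝ) : ℂ)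

/-- The number of units in the ring of integers of `ℚ(√-D)`. -/
def unitsD (P : Ctx) : ℝ := if P.D = 3 then 6 else if P.D = 4 then 4 else 2

/-- `h` is the class number of `ℚ(√-D)`, characterized by Dirichlet's class number formula
`L(1, χ_D) = 2 π h / (w √D)`. -/
def IsClassNumber (P : Ctx) [NeZero (P.d₁ * P.d₂)] (h : ℕ) : Prop :=
  DirichletCharacter.LFunction P.chiDchar 1 =
    (((2 * Real.pi * (h : ℝ) / (P.unitsD * Real.sqrt (P.D : ℝ)) : ℝ)) : ℂ)

end Ctx

/-!
At a prime `p ∤ D` put `c = χ_D(p)` and `x = p^{-z}`. Since `χ_D` is real, `c² = 1`, so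
`1 - p⁻² = (1 - c/p)(1 + c/p)` and the first factors of the product form collapse to
`(1 + c/p)⁻¹`; multiplied by `1 - c x`, the remaining bracket becomes the telescoped difference
of the two geometric sums in the sum form. At primes `p ∣ D` the Euler product is empty, and
`K_{l,l}(p^α, z)` is `(p^α)^{-z}` times two character values, each of modulus at most `1`
when `Re z ≥ 0`.
-/

section EulerFactorAlgebra

variable {K : Type*} [Field K]

theorem one_sub_inv_sq_inv_mul_one_sub_div {c q : K} (hc : c ^ 2 = 1) (hqc : q ≠ c) :
    (1 - (q ^ 2)⁻¹)⁻¹ * (1 - c / q) = (1 + c / q)⁻¹ := by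
  have hcq : 1 - c / q ≠ 0 := by
    rcases eq_or_ne q 0 with rfl | hq
    · simp
    · exact sub_ne_zero.mpr fun h => hqc ((div_eq_one_iff_eq hq).mp h.symm).symm
  have hfactor : 1 - (q ^ 2)⁻¹ = (1 + c / q) * (1 - c / q) := by
    linear_combination (q⁻¹) ^ 2 * hc
  rw [hfactor, mul_inv_rev, mul_right_comm, inv_mul_cancel₀ hcq, one_mul]

theorem inv_one_sub_mul_eq_geom_sum_sub {c x q : K} (hc : c ^ 2 = 1) (hq : q ≠ 0)
    (hcx : 1 - c * x ≠ 0) {a : ℕ} (ha : 1 ≤ a) :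
    (1 - c * x)⁻¹ * (1 - x / q + c ^ (a + 1) * (x ^ a / q) * (1 - x * q)) =
      ∑ j ∈ range (a + 1), (c * x) ^ j - x / q * ∑ j ∈ range (a - 1), (c * x) ^ j := by
  obtain ⟨b, rfl⟩ : ∃ b, a = b + 1 := ⟨a - 1, by omega⟩
  rw [inv_mul_eq_iff_eq_mul₀ hcx, Nat.add_sub_cancel]
  have hlong := mul_neg_geom_sum (c * x) (b + 2)
  have hshort := mul_neg_geom_sum (c * x) b
  linear_combination (-1) * hlong + x / q * hshort + c ^ b * x ^ (b + 1) / q * hc -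
    c ^ (b + 2) * x ^ (b + 2) * mul_inv_cancel₀ hq

end EulerFactorAlgebra

theorem corad_pos (m d : ℕ) : 0 < corad m d :=
  prod_pos fun _ hp => pow_pos (Nat.pos_of_mem_primeFactors (mem_filter.1 hp).1) _

theorem corad_eq_one_of_coprime {m d : ℕ} (h : m.Coprime d) : corad m d = 1 := by
  rw [corad, filter_false_of_mem fun _ hp hpd => (Nat.prime_of_mem_primeFactors hp).one_lt.ne'
    (Nat.eq_one_of_dvd_coprimes h (Nat.dvd_of_mem_primeFactors hp) hpd), prod_empty]

theorem norm_natCast_cpow_neg_le_one {n : ℕ} (hn : 0 < n) {z : ℂ} (hz : 0 ≤ z.re) :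
    ‖(n : ℂ) ^ (-z)‖ ≤ 1 := by
  rw [norm_natCast_cpow_of_pos hn]
  exact Real.rpow_le_one_of_one_le_of_nonpos (by exact_mod_cast hn) (by simpa using hz)

theorem _root_.DirichletCharacter.sq_eq_one_of_star_eq {d : ℕ} (χ : DirichletCharacter ℂ d)
    (hχ : ∀ a, star (χ a) = χ a) {a : ZMod d} (ha : IsUnit a) : χ a ^ 2 = 1 := by
  have hnorm : ‖χ a‖ = 1 := by simpa using χ.unit_norm_eq_one ha.unit
  rw [sq]
  nth_rewrite 2 [← hχ a]
  rw [Complex.star_def, Complex.mul_conj', hnorm]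
  norm_num

namespace Ctx

variable {P : Ctx}

theorem swap_D (P : Ctx) : P.swap.D = P.D := Nat.mul_comm _ _

theorem swap_chiD (P : Ctx) (n : ℕ) : P.swap.chiD n = P.chiD n := mul_comm _ _

theorem Good.swap (hP : P.Good) : P.swap.Good := by
  obtain ⟨h₁, h₂, hcop, hD, hprim₁, hprim₂, hreal₁, hreal₂⟩ := hP
  exact ⟨h₂, h₁, hcop.symm, P.swap_D ▸ hD, hprim₂, hprim₁, hreal₂, hreal₁⟩

theorem chiD_pow (P : Ctx) (n j : ℕ) : P.chiD (n ^ j) = P.chiD n ^ j := by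
  simp only [chiD, Nat.cast_pow, map_pow, mul_pow]

theorem Good.χ₁_sq_eq_one (hP : P.Good) {p : ℕ} (hp : p.Prime) (hpd : ¬ p ∣ P.d₁) :
    P.χ₁ (p : ZMod P.d₁) ^ 2 = 1 :=
  DirichletCharacter.sq_eq_one_of_star_eq P.χ₁ hP.2.2.2.2.2.2.1
    ((ZMod.isUnit_prime_iff_not_dvd hp).mpr hpd)

theorem Good.chiD_sq_eq_one (hP : P.Good) {p : ℕ} (hp : p.Prime) (hpD : ¬ p ∣ P.D) :
    P.chiD p ^ 2 = 1 := by
  have h₂ : P.χ₂ (p : ZMod P.d₂) ^ 2 = 1 :=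
    hP.swap.χ₁_sq_eq_one hp fun h => hpD (dvd_mul_of_dvd_right h _)
  rw [chiD, mul_pow, hP.χ₁_sq_eq_one hp fun h => hpD (dvd_mul_of_dvd_left h _), h₂, one_mul]

theorem KllP_factor_eq_KllS_factor (hP : P.Good) {p : ℕ} (hp : p.Prime) (hpD : ¬ p ∣ P.D)
    {a : ℕ} (ha : 1 ≤ a) {z : ℂ} (hz : 1 - P.chiD p * (p : ℂ) ^ (-z) ≠ 0) :
    (1 - (p : ℂ) ^ (-(2 : ℂ)))⁻¹ * (1 - P.chiD p * (p : ℂ) ^ (-z))⁻¹ *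
      (1 - P.chiD p / (p : ℂ)) * P.χ₁ (p : ZMod P.d₁) ^ a *
      (1 - (p : ℂ) ^ (-(z + 1)) +
        P.chiD (p ^ (a + 1)) * (p : ℂ) ^ (-((a : ℂ) * z + 1)) * (1 - (p : ℂ) ^ (-(z - 1)))) =
    (1 + P.chiD p / (p : ℂ))⁻¹ * P.χ₁ (p : ZMod P.d₁) ^ a *
      ((∑ j ∈ range (a + 1), P.chiD (p ^ j) * (p : ℂ) ^ (-(j : ℂ) * z)) -
        (p : ℂ) ^ (-(z + 1)) *
          ∑ j ∈ range (a - 1), P.chiD (p ^ j) * (p : ℂ) ^ (-(j : ℂ) * z)) := by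
  have hc := hP.chiD_sq_eq_one hp hpD
  have hq : (p : ℂ) ≠ 0 := Nat.cast_ne_zero.mpr hp.ne_zero
  have hqc : (p : ℂ) ≠ P.chiD p := by
    rintro h
    have hp1 : p ^ 2 = 1 := by rw [← h] at hc; exact_mod_cast hc
    nlinarith [hp.two_le]
  rw [chiD_pow]
  set c := P.chiD p
  set q : ℂ := (p : ℂ)
  set x := q ^ (-z)
  have hq2 : q ^ (-(2 : ℂ)) = (q ^ 2)⁻¹ := by rw [cpow_neg]; norm_cast
  have hz1 : q ^ (-(z + 1)) = x / q := by
    rw [neg_add, cpow_add _ _ hq, cpow_neg_one, div_eq_mul_inv]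
  have hzm1 : q ^ (-(z - 1)) = x * q := by
    rw [neg_sub', sub_neg_eq_add, cpow_add _ _ hq, cpow_one]
  have haz : q ^ (-((a : ℂ) * z + 1)) = x ^ a / q := by
    rw [neg_add, ← mul_neg, cpow_add _ _ hq, cpow_nat_mul, cpow_neg_one, div_eq_mul_inv]
  have hjz (j : ℕ) : P.chiD (p ^ j) * q ^ (-(j : ℂ) * z) = (c * x) ^ j := by
    rw [chiD_pow, neg_mul, ← mul_neg, cpow_nat_mul, mul_pow]
  simp only [hq2, hz1, hzm1, haz, hjz]
  rw [← one_sub_inv_sq_inv_mul_one_sub_div hc hqc,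
    ← inv_one_sub_mul_eq_geom_sum_sub hc hq hz ha]
  ring

theorem KllP_eq_KllS (hP : P.Good) {m : ℕ} (hm : 0 < m) {z : ℂ}
    (hz : ∀ p ∈ m.primeFactors.filter (fun p => ¬ p ∣ P.D),
      (1 : ℂ) - P.chiD p * (p : ℂ) ^ (-z) ≠ 0) :
    P.KllP m z = P.KllS m z := by
  rw [KllP, KllS]
  refine congrArg _ (prod_congr rfl fun p hp => ?_)
  obtain ⟨hpm, hpD⟩ := mem_filter.mp hp
  have hprime := Nat.prime_of_mem_primeFactors hpm
  exact P.KllP_factor_eq_KllS_factor hP hprime hpD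
    (hprime.factorization_pos_of_dvd hm.ne' (Nat.dvd_of_mem_primeFactors hpm)) (hz p hp)

theorem KllS_prime (hP : P.Good) {p : ℕ} (hp : p.Prime) (hpD : ¬ p ∣ P.D) (z : ℂ) :
    P.KllS p z = (P.χ₁ (p : ZMod P.d₁) + P.χ₂ (p : ZMod P.d₂) * (p : ℂ) ^ (-z)) *
      (1 + P.chiD p / (p : ℂ))⁻¹ := by
  have hpd₁ : ¬ p ∣ P.d₁ := fun h => hpD (dvd_mul_of_dvd_left h _)
  have hpd₂ : ¬ p ∣ P.d₂ := fun h => hpD (dvd_mul_of_dvd_right h _)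
  rw [KllS, corad_eq_one_of_coprime ((hp.coprime_iff_not_dvd).2 hpd₁),
    corad_eq_one_of_coprime ((hp.coprime_iff_not_dvd).2 hpd₂), hp.primeFactors,
    filter_singleton, if_pos hpD, prod_singleton, hp.factorization_self]
  simp only [chiD, sum_range_succ, range_one, sum_singleton, range_zero, sum_empty, pow_zero,
    pow_one, Nat.cast_one, map_one, one_cpow, CharP.cast_eq_zero, zero_mul, neg_zero, cpow_zero,
    Nat.sub_self, mul_zero, mul_one, one_mul, sub_zero, neg_mul]
  linear_combination (1 + P.χ₁ (p : ZMod P.d₁) * P.χ₂ (p : ZMod P.d₂) / (p : ℂ))⁻¹ *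
    P.χ₂ (p : ZMod P.d₂) * (p : ℂ) ^ (-z) * hP.χ₁_sq_eq_one hp hpd₁

theorem KllP_prime (hP : P.Good) {p : ℕ} (hp : p.Prime) (hpD : ¬ p ∣ P.D) {z : ℂ}
    (hz : (1 : ℂ) - P.chiD p * (p : ℂ) ^ (-z) ≠ 0) :
    P.KllP p z = (P.χ₁ (p : ZMod P.d₁) + P.χ₂ (p : ZMod P.d₂) * (p : ℂ) ^ (-z)) *
      (1 + P.chiD p / (p : ℂ))⁻¹ := by
  rw [P.KllP_eq_KllS hP hp.pos, P.KllS_prime hP hp hpD]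
  simpa only [hp.primeFactors, filter_singleton, if_pos hpD, mem_singleton, forall_eq] using hz

theorem norm_KllP_le_one {m : ℕ} (hm : ∀ p ∈ m.primeFactors, p ∣ P.D) {z : ℂ}
    (hz : 0 ≤ z.re) : ‖P.KllP m z‖ ≤ 1 := by
  rw [KllP, filter_false_of_mem fun p hp => not_not_intro (hm p hp), prod_empty, mul_one,
    norm_mul, norm_mul]
  exact mul_le_one₀ (mul_le_one₀ (norm_natCast_cpow_neg_le_one (corad_pos _ _) hz)
    (norm_nonneg _) (DirichletCharacter.norm_le_one _ _)) (norm_nonneg _)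
    (DirichletCharacter.norm_le_one _ _)

end Ctx

theorem statement_6 (P : Ctx) (hP : P.Good) :
    (∀ m : ℕ, 0 < m → ∀ z : ℂ,
      (∀ p ∈ m.primeFactors.filter (fun p => ¬ p ∣ P.D),
          (1 : ℂ) - P.chiD p * (p : ℂ) ^ (-z) ≠ 0) →
      P.KllP m z = P.KllS m z ∧ P.swap.KllP m z = P.swap.KllS m z) ∧
    (∀ p : ℕ, p.Prime → ¬ p ∣ P.D → ∀ z : ℂ,
      (1 : ℂ) - P.chiD p * (p : ℂ) ^ (-z) ≠ 0 →
      P.KllP p z =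
        (P.χ₁ (p : ZMod P.d₁) + P.χ₂ (p : ZMod P.d₂) * (p : ℂ) ^ (-z)) *
          (1 + P.chiD p / (p : ℂ))⁻¹ ∧
      P.swap.KllP p z =
        (P.χ₂ (p : ZMod P.d₂) + P.χ₁ (p : ZMod P.d₁) * (p : ℂ) ^ (-z)) *
          (1 + P.chiD p / (p : ℂ))⁻¹) ∧
    (∀ p : ℕ, p.Prime → p ∣ P.D → ∀ a : ℕ, 1 ≤ a → ∀ z : ℂ, 0 ≤ z.re →
      ‖P.KllP (p ^ a) z‖ ≤ 1 ∧ ‖P.swap.KllP (p ^ a) z‖ ≤ 1) := by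
  refine ⟨fun m hm z hz => ⟨P.KllP_eq_KllS hP hm hz, ?_⟩,
    fun p hp hpD z hz => ⟨P.KllP_prime hP hp hpD hz, ?_⟩,
    fun p hp hpD a ha z hz => ?_⟩
  · exact P.swap.KllP_eq_KllS hP.swap hm (by simpa only [Ctx.swap_D, Ctx.swap_chiD] using hz)
  · have h := P.swap.KllP_prime hP.swap hp (P.swap_D ▸ hpD) (P.swap_chiD p ▸ hz)
    rwa [Ctx.swap_chiD] at h
  · have hdvd : ∀ q ∈ (p ^ a).primeFactors, q ∣ P.D := by
      simpa [Nat.primeFactors_prime_pow (Nat.one_le_iff_ne_zero.mp ha) hp] using hpD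
    exact ⟨P.norm_KllP_le_one hdvd hz, P.swap.norm_KllP_le_one (P.swap_D ▸ hdvd) hz⟩

end EpsteinPaper
end
end

section
/- Let p be a prime with p ∤ d₁d₂. Then: α(p) = −(χ_{d₁}(p) + χ_{d₂}(p))/2; α(p²) = −(χ_{d₁}(p)² + χ_{d₂}(p)²)/8 + χ_D(p)/4; α(p^k) = 0 for every odd k ≥ 3; and |α(p^k)| ≤ 1/(2k) for every even k ≥ 4. -/
noncomputable section

open Complex Finset MeasureTheory

namespace PowerSeries

theorem eq_of_mul_self_eq_of_constantCoeff_eq {R : Type*} [CommRing R] [IsDomain R]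
    (hR : ringChar R ≠ 2) {f g : R⟦X⟧} (h : f * f = g * g)
    (h₀ : constantCoeff f = constantCoeff g) (hg : constantCoeff g ≠ 0) : f = g := by
  refine (mul_self_eq_mul_self_iff.1 h).resolve_right fun hfg => hg ?_
  rw [hfg, map_neg] at h₀
  exact (Ring.eq_self_iff_eq_zero_of_char_ne_two hR).1 h₀

variable {K : Type*} [Field K] [CharZero K]

theorem binomialSeries_half_mul_self :
    binomialSeries K (1 / 2 : K) * binomialSeries K (1 / 2 : K) = 1 + X := by
  rw [← binomialSeries_add, add_halves, ← Nat.cast_one, binomialSeries_nat, pow_one]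

/-- Both sides are square roots of `1 - X²` with constant term `1`. -/
theorem binomialSeries_half_mul_rescale_neg_one :
    binomialSeries K (1 / 2 : K) * rescale (-1) (binomialSeries K (1 / 2 : K)) =
      expand 2 two_ne_zero (rescale (-1) (binomialSeries K (1 / 2 : K))) := by
  refine eq_of_mul_self_eq_of_constantCoeff_eq (by simp [ringChar.eq_zero]) ?_ (by simp)
    (by rw [constantCoeff_expand, ← coeff_zero_eq_constantCoeff_apply, coeff_rescale]; simp)
  calc _ = (binomialSeries K (1 / 2 : K) * binomialSeries K (1 / 2 : K)) *
        rescale (-1) (binomialSeries K (1 / 2 : K) * binomialSeries K (1 / 2 : K)) := by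
          rw [map_mul]; ring
    _ = _ := by
      rw [← map_mul, ← map_mul, binomialSeries_half_mul_self]
      simp only [map_add, map_one, rescale_X, map_neg, neg_mul, one_mul, expand_X]
      ring

end PowerSeries

namespace DirichletCharacter

theorem sq_apply_eq_one_of_isUnit {d : ℕ} (χ : DirichletCharacter ℂ d)
    (hχ : ∀ a, star (χ a) = χ a) {a : ZMod d} (ha : IsUnit a) : χ a ^ 2 = 1 := by
  calc χ a ^ 2 = χ a * star (χ a) := by rw [hχ, sq]
    _ = (‖χ a‖ ^ 2 : ℝ) := by rw [Complex.star_def, Complex.mul_conj, Complex.normSq_eq_norm_sq]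
    _ = 1 := by rw [← ha.unit_spec, χ.unit_norm_eq_one]; norm_num

end DirichletCharacter

namespace EpsteinPaper

open PowerSeries

theorem gchoose_eq_ringChoose (z : ℂ) (k : ℕ) : gchoose z k = Ring.choose z k := by
  have h := Ring.descPochhammer_eq_factorial_smul_choose z k
  rw [← Polynomial.aeval_eq_smeval, Polynomial.aeval_def, ← Polynomial.eval_map,
    descPochhammer_map, descPochhammer_eval_eq_prod_range, nsmul_eq_mul] at h
  rw [gchoose, h, mul_div_cancel_left₀ _ (by exact_mod_cast k.factorial_ne_zero)]

theorem coeff_binomialSeries (z : ℂ) (k : ℕ) : coeff k (binomialSeries ℂ z) = gchoose z k := by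
  simp [gchoose_eq_ringChoose]

theorem gchoose_succ (z : ℂ) (k : ℕ) :
    gchoose z (k + 1) = gchoose z k * (z - k) / (k + 1) := by
  rw [gchoose, gchoose, Finset.prod_range_succ, Nat.factorial_succ]
  push_cast
  field_simp

theorem norm_gchoose_half_le {m : ℕ} (hm : 2 ≤ m) : ‖gchoose (1 / 2) m‖ ≤ 1 / (4 * m) := by
  induction m, hm using Nat.le_induction with
  | base => norm_num [gchoose_succ, gchoose]
  | succ m hm ih =>
    have hm' : (2 : ℝ) ≤ m := by exact_mod_cast hm
    have hnum : ‖(1 / 2 : ℂ) - m‖ = m - 1 / 2 := by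
      rw [show (1 / 2 : ℂ) - m = ((1 / 2 - m : ℝ) : ℂ) by push_cast; ring, Complex.norm_real,
        Real.norm_of_nonpos (by linarith)]
      ring
    have hden : ‖(m : ℂ) + 1‖ = m + 1 := by exact_mod_cast Complex.norm_natCast (m + 1)
    calc ‖gchoose (1 / 2) (m + 1)‖ = ‖gchoose (1 / 2) m‖ * ((m - 1 / 2) / (m + 1)) := by
          rw [gchoose_succ, norm_div, norm_mul, hnum, hden, mul_div_assoc]
      _ ≤ 1 / (4 * m) * ((m - 1 / 2) / (m + 1)) := by
          gcongr
          exact div_nonneg (by linarith) (by positivity)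
      _ ≤ 1 / (4 * ((m + 1 : ℕ) : ℝ)) := by
          rw [div_mul_div_comm, div_le_div_iff₀ (by positivity) (by positivity)]
          push_cast
          nlinarith

def sqrtEulerFactor (c₁ c₂ : ℂ) : ℂ⟦X⟧ :=
  rescale (-c₁) (binomialSeries ℂ (1 / 2 : ℂ)) * rescale (-c₂) (binomialSeries ℂ (1 / 2 : ℂ))

theorem sqrtEulerFactor_self (c : ℂ) : sqrtEulerFactor c c = 1 - C c * X := by
  rw [sqrtEulerFactor, ← map_mul, binomialSeries_half_mul_self]
  simp [sub_eq_add_neg]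

theorem sqrtEulerFactor_neg (c : ℂ) :
    sqrtEulerFactor c (-c) =
      rescale (-c) (expand 2 two_ne_zero (rescale (-1) (binomialSeries ℂ (1 / 2 : ℂ)))) := by
  rw [← binomialSeries_half_mul_rescale_neg_one, map_mul, rescale_rescale, neg_one_mul,
    sqrtEulerFactor]

theorem coeff_sqrtEulerFactor_neg (c : ℂ) (k : ℕ) :
    coeff k (sqrtEulerFactor c (-c)) =
      (-c) ^ k * if 2 ∣ k then (-1) ^ (k / 2) * gchoose (1 / 2) (k / 2) else 0 := by
  rw [sqrtEulerFactor_neg, coeff_rescale, coeff_expand]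
  split_ifs <;> simp only [coeff_rescale, coeff_binomialSeries]

theorem coeff_sqrtEulerFactor_of_sq_eq_one {c₁ c₂ : ℂ} (h₁ : c₁ ^ 2 = 1) (h₂ : c₂ ^ 2 = 1) :
    coeff 1 (sqrtEulerFactor c₁ c₂) = -(c₁ + c₂) / 2 ∧
    coeff 2 (sqrtEulerFactor c₁ c₂) = -(c₁ ^ 2 + c₂ ^ 2) / 8 + c₁ * c₂ / 4 ∧
    (∀ k : ℕ, Odd k → 3 ≤ k → coeff k (sqrtEulerFactor c₁ c₂) = 0) ∧
    (∀ k : ℕ, Even k → 4 ≤ k → ‖coeff k (sqrtEulerFactor c₁ c₂)‖ ≤ 1 / (2 * (k : ℝ))) := by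
  rcases sq_eq_sq_iff_eq_or_eq_neg.1 (h₂.trans h₁.symm) with rfl | rfl
  · have hcoeff (k : ℕ) (hk : 2 ≤ k) : coeff k (sqrtEulerFactor c₂ c₂) = 0 := by
      simp [sqrtEulerFactor_self, coeff_X, show k ≠ 0 by omega, show k ≠ 1 by omega]
    refine ⟨?_, ?_, fun k _ hk => hcoeff k (by omega), fun k _ hk => ?_⟩
    · simp [sqrtEulerFactor_self]
    · rw [hcoeff 2 le_rfl]
      ring
    · rw [hcoeff k (by omega), norm_zero]
      positivity
  · refine ⟨?_, ?_, fun k hk _ => ?_, fun k hk hk4 => ?_⟩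
    · simp [coeff_sqrtEulerFactor_neg]
    · have hg : gchoose (1 / 2) 1 = 1 / 2 := by norm_num [gchoose]
      rw [coeff_sqrtEulerFactor_neg, if_pos dvd_rfl, Nat.div_self two_pos, hg]
      ring
    · simp [coeff_sqrtEulerFactor_neg, ← even_iff_two_dvd, Nat.not_even_iff_odd.2 hk]
    · obtain ⟨m, rfl⟩ := hk
      have hpow : (-c₁) ^ (m + m) = 1 := by rw [← two_mul, pow_mul, neg_sq, h₁, one_pow]
      rw [coeff_sqrtEulerFactor_neg, if_pos ⟨m, by omega⟩, hpow, one_mul, norm_mul, norm_pow,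
        norm_neg, norm_one, one_pow, one_mul, show (m + m) / 2 = m by omega]
      calc ‖gchoose (1 / 2) m‖ ≤ 1 / (4 * m) := norm_gchoose_half_le (by omega)
        _ = 1 / (2 * ((m + m : ℕ) : ℝ)) := by push_cast; ring_nf

theorem Ctx.IsAlpha.apply_prime_pow {P : Ctx} {α : ℕ → ℂ} (hα : P.IsAlpha α) {p : ℕ}
    (hp : p.Prime) (k : ℕ) :
    α (p ^ k) = coeff k (sqrtEulerFactor (P.χ₁ p) (P.χ₂ p)) := by
  rw [hα.2.2 p hp k, sqrtEulerFactor, coeff_mul]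
  simp only [coeff_rescale, coeff_binomialSeries]
  exact Finset.sum_congr rfl fun _ _ => by ring

theorem statement_9 (P : Ctx) (hP : P.Good) (α : ℕ → ℂ) (hα : P.IsAlpha α) :
    ∀ p : ℕ, p.Prime → ¬ p ∣ P.D →
      α p = -(P.χ₁ (p : ZMod P.d₁) + P.χ₂ (p : ZMod P.d₂)) / 2 ∧
      α (p ^ 2) = -((P.χ₁ (p : ZMod P.d₁)) ^ 2 + (P.χ₂ (p : ZMod P.d₂)) ^ 2) / 8 +
        P.chiD p / 4 ∧
      (∀ k : ℕ, Odd k → 3 ≤ k → α (p ^ k) = 0) ∧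
      (∀ k : ℕ, Even k → 4 ≤ k → ‖α (p ^ k)‖ ≤ 1 / (2 * (k : ℝ))) := by
  obtain ⟨-, -, -, -, -, -, hχ₁, hχ₂⟩ := hP
  intro p hp hpD
  have hsq₁ := P.χ₁.sq_apply_eq_one_of_isUnit hχ₁ ((ZMod.isUnit_iff_coprime p P.d₁).2 <|
    hp.coprime_iff_not_dvd.2 fun h => hpD (h.mul_right _))
  have hsq₂ := P.χ₂.sq_apply_eq_one_of_isUnit hχ₂ ((ZMod.isUnit_iff_coprime p P.d₂).2 <|
    hp.coprime_iff_not_dvd.2 fun h => hpD (h.mul_left _))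
  obtain ⟨h1, h2, hodd, heven⟩ := coeff_sqrtEulerFactor_of_sq_eq_one hsq₁ hsq₂
  refine ⟨by simpa using (hα.apply_prime_pow hp 1).trans h1, (hα.apply_prime_pow hp 2).trans h2,
    fun k hk hk3 => (hα.apply_prime_pow hp k).trans (hodd k hk hk3), fun k hk hk4 => ?_⟩
  rw [hα.apply_prime_pow hp k]
  exact heven k hk hk4

end EpsteinPaper
end
end
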